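/- arXiv:1305.2156 — 6 statements merged into one kernel-verified Lean document; each statement's English description precedes it below -/
import Mathlib

section
/- Let w and f be nonnegative integers with w - 4*f ≤ 4, and let v be the result of iterating the function x ↦ |4 - x| exactly f times starting from w. Let d be the unique integer with 0 ≤ d ≤ 7 and d ≡ w (mod 8). Then v = |4 - d| if f is odd, and v = 4 - |4 - d| if f is even. -/
/-- A component of a dots-and-boxes endgame: a chain or a loop, with an integer length. -/
inductive Comp : Type
  | chain (c : ℤ) : Comp
  | loop (l : ℤ) : Comp
  deriving DecidableEq

/-- The length (number of boxes) of a component. -/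
def Comp.len : Comp → ℤ
  | .chain c => c
  | .loop l => l

/-- A simple loony endgame: a multiset of chains of length ≥ 3 and loops of even length ≥ 4. -/
def IsSimpleLoony (G : Multiset Comp) : Prop :=
  ∀ p ∈ G, match p with
    | .chain c => 3 ≤ c
    | .loop l => 4 ≤ l ∧ Even l

/-- Fuel-indexed value function. -/
noncomputable def vAux : ℕ → Multiset Comp → ℤ
  | 0, _ => 0
  | n + 1, G =>
    if G = 0 then 0
    else sInf { x : ℤ | ∃ p ∈ G,
      x = match p with
        | Comp.chain c => c - 2 + |vAux n (G.erase p) - 2|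
        | Comp.loop l => l - 4 + |vAux n (G.erase p) - 4| }

/-- The value of a simple loony endgame: 0 on the empty game; on a nonempty game, the
minimum over components of `c - 2 + |v(G∖{c}) - 2|` for a chain of length `c` and
`ℓ - 4 + |v(G∖{ℓ}) - 4|` for a loop of length `ℓ`. -/
noncomputable def v (G : Multiset Comp) : ℤ := vAux (Multiset.card G) G

/-- The fully controlled value: Σ_chains (c - 4) + Σ_loops (ℓ - 8). -/
def fcv (G : Multiset Comp) : ℤ :=
  (G.map (fun p => match p with
    | Comp.chain c => c - 4
    | Comp.loop l => l - 8)).sum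

/-- The terminal bonus. -/
noncomputable def tb (G : Multiset Comp) : ℤ :=
  open Classical in
  if G = 0 then 0
  else if (∃ c, 4 ≤ c ∧ Comp.chain c ∈ G) ∨ (∀ l, Comp.loop l ∉ G) then 4
  else if ∀ c, Comp.chain c ∉ G then 8
  else 6

/-- The controlled value. -/
noncomputable def cv (G : Multiset Comp) : ℤ := fcv G + tb G


lemma key_arith (w e : ℤ) (hw : 0 ≤ w) (he : e = w - 4 ∨ e = 4 - w) (he0 : 0 ≤ e) :
    4 - |4 - e % 8| = |4 - w % 8| := by
  rcases abs_cases (4 - e % 8) with ⟨h1, h2⟩ | ⟨h1, h2⟩ <;>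
    rcases abs_cases (4 - w % 8) with ⟨h3, h4⟩ | ⟨h3, h4⟩ <;> omega

lemma key_iter (f : ℕ) : ∀ w : ℤ, 0 ≤ w → w ≤ 4 * f + 4 →
    (Odd f → (fun x : ℤ => |4 - x|)^[f] w = |4 - w % 8|) ∧
    (Even f → (fun x : ℤ => |4 - x|)^[f] w = 4 - |4 - w % 8|) := by
  induction f with
  | zero =>
    intro w hw0 hw4
    refine ⟨fun h => absurd h (by simp), fun _ => ?_⟩
    simp only [Function.iterate_zero, id]
    have hm : w % 8 = w := Int.emod_eq_of_lt hw0 (by omega)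
    rw [hm, abs_of_nonneg (by omega : (0:ℤ) ≤ 4 - w)]
    omega
  | succ f ih =>
    intro w hw0 hw4
    have he0 : (0:ℤ) ≤ |4 - w| := abs_nonneg _
    have he : |4 - w| = w - 4 ∨ |4 - w| = 4 - w := by
      rcases abs_cases (4 - w) with ⟨h1, _⟩ | ⟨h1, _⟩ <;> omega
    have he4 : |4 - w| ≤ 4 * f + 4 := by omega
    obtain ⟨iho, ihe⟩ := ih (|4 - w|) he0 he4
    have hstep : (fun x : ℤ => |4 - x|)^[f + 1] w = (fun x : ℤ => |4 - x|)^[f] (|4 - w|) := by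
      rw [Function.iterate_succ_apply]
    have harith := key_arith w (|4 - w|) hw0 he he0
    constructor
    · intro hodd
      obtain ⟨k, hk⟩ := hodd
      have hef : Even f := ⟨k, by omega⟩
      rw [hstep, ihe hef, harith]
    · intro heven
      obtain ⟨k, hk⟩ := heven
      have hof : Odd f := ⟨k - 1, by omega⟩
      rw [hstep, iho hof]
      omega

theorem stmt0 (w : ℤ) (f : ℕ) (hw : 0 ≤ w) (hwf : w - 4 * (f : ℤ) ≤ 4)
    (vv d : ℤ) (hv : vv = (fun x : ℤ => |4 - x|)^[f] w)
    (hd0 : 0 ≤ d) (hd7 : d ≤ 7) (hdw : d ≡ w [ZMOD 8]) :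
    (Odd f → vv = |4 - d|) ∧ (Even f → vv = 4 - |4 - d|) := by
  have hdw' : d % 8 = w % 8 := hdw
  have hd : d = w % 8 := by omega
  obtain ⟨h1, h2⟩ := key_iter f w hw (by omega)
  subst hv hd
  exact ⟨h1, h2⟩
end

section
/- If G is a simple loony endgame consisting only of chains, all of length at least 4, with chain lengths c_1, ..., c_n (n ≥ 1), then v(G) = 4 + Σ_{i=1}^n (c_i - 4). -/
lemma chain_inj : Function.Injective Comp.chain := fun a b h => by cases h; rfl

lemma vAux_zero (n : ℕ) : vAux n 0 = 0 := by cases n <;> simp [vAux]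

lemma sum_sub_nonneg (C : Multiset ℤ) (hc : ∀ c ∈ C, 4 ≤ c) :
    0 ≤ (C.map (fun c => c - 4)).sum := by
  apply Multiset.sum_nonneg
  intro x hx
  obtain ⟨c, hcC, rfl⟩ := Multiset.mem_map.mp hx
  linarith [hc c hcC]

theorem stmt1 (C : Multiset ℤ) (hC : C ≠ 0) (hc : ∀ c ∈ C, 4 ≤ c) :
    v (C.map Comp.chain) = 4 + (C.map (fun c => c - 4)).sum := by
  induction C using Multiset.strongInductionOn with
  | _ C ih =>
  obtain ⟨n, hn⟩ : ∃ n, Multiset.card C = n + 1 := by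
    rcases Nat.exists_eq_succ_of_ne_zero (fun h => hC (Multiset.card_eq_zero.mp h)) with ⟨n, h⟩
    exact ⟨n, h⟩
  have hG : C.map Comp.chain ≠ 0 := by simpa using hC
  have key : ∀ c ∈ C,
      c - 2 + |vAux n ((C.map Comp.chain).erase (Comp.chain c)) - 2|
        = 4 + (C.map (fun c => c - 4)).sum := by
    intro c hcC
    have herase : (C.map Comp.chain).erase (Comp.chain c) = (C.erase c).map Comp.chain :=
      (Multiset.map_erase _ chain_inj _ _).symm
    have hsum : (C.map (fun c => c - 4)).sum = (c - 4) + ((C.erase c).map (fun c => c - 4)).sum := by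
      conv_lhs => rw [← Multiset.cons_erase hcC]
      simp
    rw [herase]
    by_cases h0 : C.erase c = 0
    · rw [h0] at hsum ⊢
      simp only [Multiset.map_zero, Multiset.sum_zero, vAux_zero]
      rw [hsum]; norm_num
    · have hcard : Multiset.card (C.erase c) = n := by
        rw [Multiset.card_erase_of_mem hcC, hn]; rfl
      have hv : vAux n ((C.erase c).map Comp.chain)
          = 4 + ((C.erase c).map (fun c => c - 4)).sum := by
        have := ih (C.erase c) (Multiset.erase_lt.mpr hcC) h0
          (fun d hd => hc d (Multiset.mem_of_mem_erase hd))
        unfold v at this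
        rwa [Multiset.card_map, hcard] at this
      have hpos : 0 ≤ ((C.erase c).map (fun c => c - 4)).sum :=
        sum_sub_nonneg _ (fun d hd => hc d (Multiset.mem_of_mem_erase hd))
      rw [hv, abs_of_nonneg (by linarith), hsum]
      ring
  unfold v
  rw [Multiset.card_map, hn]
  show (if C.map Comp.chain = 0 then 0 else sInf _) = _
  rw [if_neg hG]
  have hset : { x : ℤ | ∃ p ∈ C.map Comp.chain,
      x = match p with
        | Comp.chain c => c - 2 + |vAux n ((C.map Comp.chain).erase p) - 2|
        | Comp.loop l => l - 4 + |vAux n ((C.map Comp.chain).erase p) - 4| }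
      = {4 + (C.map (fun c => c - 4)).sum} := by
    ext x
    simp only [Set.mem_setOf_eq, Set.mem_singleton_iff, Multiset.mem_map]
    constructor
    · rintro ⟨p, ⟨c, hcC, rfl⟩, rfl⟩
      exact key c hcC
    · rintro rfl
      obtain ⟨c, hcC⟩ := Multiset.exists_mem_of_ne_zero hC
      exact ⟨Comp.chain c, ⟨c, hcC, rfl⟩, (key c hcC).symm⟩
  rw [hset, csInf_singleton]
end

section
/- Let G be a simple loony endgame consisting only of loops, each of even length at least 8, with lengths ℓ_1, ..., ℓ_n (n ≥ 1). Then v(G) = 8 + Σ_{i=1}^n (ℓ_i - 8). -/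
lemma key : ∀ (n : ℕ) (L : Multiset ℤ), L.card ≤ n → L ≠ 0 → (∀ l ∈ L, 8 ≤ l) →
    v (L.map Comp.loop) = 8 + (L.map (fun l => l - 8)).sum := by
  intro n
  induction n with
  | zero =>
    intro L hc h0 _
    exact absurd (Multiset.card_eq_zero.mp (Nat.le_zero.mp hc)) (by simpa using h0)
  | succ n ih =>
    intro L hc h0 h8
    have hinj : Function.Injective Comp.loop := fun a b h => by injection h
    obtain ⟨k, hk⟩ : ∃ k, L.card = k + 1 :=
      ⟨L.card - 1, (Nat.succ_pred_eq_of_pos (Multiset.card_pos.mpr h0)).symm⟩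
    have hG0 : L.map Comp.loop ≠ 0 := by simpa using h0
    have hcard : (L.map Comp.loop).card = k + 1 := by rw [Multiset.card_map, hk]
    set c : ℤ := 8 + (L.map (fun l => l - 8)).sum with hcdef
    have claim : ∀ l ∈ L,
        (l - 4 + |vAux k ((L.map Comp.loop).erase (Comp.loop l)) - 4|) = c := by
      intro l hl
      have herase : (L.map Comp.loop).erase (Comp.loop l) = (L.erase l).map Comp.loop :=
        (Multiset.map_erase Comp.loop hinj l L).symm
      have hcarde : (L.erase l).card = k := by
        rw [Multiset.card_erase_of_mem hl, hk]; rfl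
      have hv : vAux k ((L.map Comp.loop).erase (Comp.loop l)) = v ((L.erase l).map Comp.loop) := by
        rw [herase]; unfold v; rw [Multiset.card_map, hcarde]
      have hsum : (L.map (fun l => l - 8)).sum = (l - 8) + ((L.erase l).map (fun l => l - 8)).sum := by
        conv_lhs => rw [← Multiset.cons_erase hl]
        simp
      by_cases he : L.erase l = 0
      · rw [hv, he]
        have : v ((0 : Multiset ℤ).map Comp.loop) = 0 := by simp [v, vAux]
        rw [this]
        rw [hcdef, hsum, he]
        simp
      · have hle : (L.erase l).card ≤ n := by omega
        have h8' : ∀ x ∈ L.erase l, 8 ≤ x := fun x hx => h8 x (Multiset.mem_of_mem_erase hx)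
        have hIH := ih (L.erase l) hle he h8'
        rw [hv, hIH]
        have hnn : (0:ℤ) ≤ ((L.erase l).map (fun l => l - 8)).sum := by
          apply Multiset.sum_nonneg
          intro x hx
          obtain ⟨y, hy, rfl⟩ := Multiset.mem_map.mp hx
          linarith [h8' y hy]
        rw [abs_of_nonneg (by linarith)]
        rw [hcdef, hsum]
        ring
    have hSet : { x : ℤ | ∃ p ∈ L.map Comp.loop,
        x = match p with
          | Comp.chain c => c - 2 + |vAux k ((L.map Comp.loop).erase p) - 2|
          | Comp.loop l => l - 4 + |vAux k ((L.map Comp.loop).erase p) - 4| } = {c} := by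
      ext x
      simp only [Set.mem_setOf_eq, Set.mem_singleton_iff]
      constructor
      · rintro ⟨p, hp, hx⟩
        obtain ⟨l, hl, rfl⟩ := Multiset.mem_map.mp hp
        rw [hx]
        exact claim l hl
      · rintro rfl
        obtain ⟨l, hl⟩ := Multiset.exists_mem_of_ne_zero h0
        exact ⟨Comp.loop l, Multiset.mem_map_of_mem _ hl, (claim l hl).symm⟩
    show vAux ((L.map Comp.loop).card) (L.map Comp.loop) = c
    rw [hcard]
    rw [vAux, if_neg hG0, hSet, csInf_singleton]

theorem stmt3 (L : Multiset ℤ) (hL : L ≠ 0) (hl : ∀ l ∈ L, 8 ≤ l ∧ Even l) :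
    v (L.map Comp.loop) = 8 + (L.map (fun l => l - 8)).sum :=
  key L.card L le_rfl hL (fun l h => (hl l h).1)
end

section
/- Let G be a nonempty simple loony endgame consisting only of loops of even lengths ℓ_1, ..., ℓ_n, and set c = 8 + Σ_i (ℓ_i - 8). If c ≤ 0 and G contains no loop of length 4, then v(G) ∈ {2, 4} and v(G) ≡ c (mod 4). -/
def wt : Comp → ℤ | .chain _ => 2 | .loop _ => 4

lemma vAux_succ_eq (n : ℕ) (G : Multiset Comp) (h : G ≠ 0) :
    vAux (n+1) G = sInf { x : ℤ | ∃ p ∈ G,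
      x = p.len - wt p + |vAux n (G.erase p) - wt p| } := by
  rw [vAux, if_neg h]
  congr 1
  ext x
  constructor
  · rintro ⟨p, hp, rfl⟩
    exact ⟨p, hp, by cases p <;> rfl⟩
  · rintro ⟨p, hp, rfl⟩
    exact ⟨p, hp, by cases p <;> rfl⟩

lemma vAux_stable (n : ℕ) : ∀ G, Multiset.card G ≤ n → vAux (n+1) G = vAux n G := by
  induction n with
  | zero =>
    intro G h
    have hG : G = 0 := Multiset.card_eq_zero.mp (Nat.le_zero.mp h)
    subst hG; simp [vAux]
  | succ n ih =>
    intro G h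
    by_cases hG : G = 0
    · subst hG; simp [vAux]
    · rw [vAux_succ_eq (n+1) G hG, vAux_succ_eq n G hG]
      have hpt : ∀ p ∈ G, vAux (n+1) (G.erase p) = vAux n (G.erase p) := by
        intro p hp
        exact ih _ (by rw [Multiset.card_erase_of_mem hp, Nat.pred_eq_sub_one]; omega)
      congr 1
      ext x
      constructor <;> rintro ⟨p, hp, rfl⟩ <;> exact ⟨p, hp, by rw [hpt p hp]⟩

lemma vAux_eq_v (G : Multiset Comp) : ∀ n, Multiset.card G ≤ n → vAux n G = v G := by
  intro n hn
  induction n, hn using Nat.le_induction with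
  | base => rfl
  | succ n hn ih => rw [vAux_stable n G hn, ih]

lemma v_rec (G : Multiset Comp) (hG : G ≠ 0) :
    v G = sInf { x : ℤ | ∃ p ∈ G, x = p.len - wt p + |v (G.erase p) - wt p| } := by
  have hc : Multiset.card G ≠ 0 := by simpa [Multiset.card_eq_zero] using hG
  obtain ⟨m, hm⟩ : ∃ m, Multiset.card G = m + 1 :=
    ⟨Multiset.card G - 1, (Nat.succ_pred_eq_of_pos (Nat.pos_of_ne_zero hc)).symm⟩
  rw [v, hm, vAux_succ_eq m G hG]
  congr 1
  ext x
  constructor <;> rintro ⟨p, hp, rfl⟩ <;> refine ⟨p, hp, ?_⟩ <;>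
    rw [vAux_eq_v (G.erase p) m (by rw [Multiset.card_erase_of_mem hp, Nat.pred_eq_sub_one]; omega)]

lemma v_eq_of (G : Multiset Comp) (hG : G ≠ 0) (a : ℤ)
    (h1 : ∃ p ∈ G, p.len - wt p + |v (G.erase p) - wt p| = a)
    (h2 : ∀ p ∈ G, a ≤ p.len - wt p + |v (G.erase p) - wt p|) :
    v G = a := by
  rw [v_rec G hG]
  apply IsLeast.csInf_eq
  constructor
  · obtain ⟨p, hp, he⟩ := h1; exact ⟨p, hp, he.symm⟩
  · rintro x ⟨p, hp, rfl⟩; exact h2 p hp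

lemma loops_erase (L : Multiset ℤ) (l : ℤ) :
    (L.map Comp.loop).erase (Comp.loop l) = (L.erase l).map Comp.loop :=
  (Multiset.map_erase _ (fun a b h => by injection h) _ _).symm

lemma v_loops_eq (L : Multiset ℤ) (hL : L ≠ 0) (a : ℤ)
    (h1 : ∃ l ∈ L, l - 4 + |v ((L.erase l).map Comp.loop) - 4| = a)
    (h2 : ∀ l ∈ L, a ≤ l - 4 + |v ((L.erase l).map Comp.loop) - 4|) :
    v (L.map Comp.loop) = a := by
  apply v_eq_of _ (by simpa using hL)
  · obtain ⟨l, hl, he⟩ := h1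
    exact ⟨Comp.loop l, Multiset.mem_map_of_mem _ hl,
      by simpa [Comp.len, wt, loops_erase L l] using he⟩
  · rintro p hp
    obtain ⟨l, hl, rfl⟩ := Multiset.mem_map.mp hp
    simpa [Comp.len, wt, loops_erase L l] using h2 l hl

def cL (L : Multiset ℤ) : ℤ := 8 + (L.map (fun l => l - 8)).sum

noncomputable def F (L : Multiset ℤ) : ℤ :=
  if L = 0 then 0 else if 2 ≤ cL L then cL L else if (4:ℤ) ∣ cL L then 4 else 2

lemma cL_erase (L : Multiset ℤ) (l : ℤ) (hl : l ∈ L) :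
    cL (L.erase l) = cL L + 8 - l := by
  unfold cL
  conv_rhs => rw [← Multiset.cons_erase hl]
  rw [Multiset.map_cons, Multiset.sum_cons]
  ring

lemma cL_even (L : Multiset ℤ) (h : ∀ l ∈ L, Even l) : (2:ℤ) ∣ cL L := by
  unfold cL
  have : (2:ℤ) ∣ (L.map (fun l => l - 8)).sum := by
    apply Multiset.dvd_sum
    intro x hx
    obtain ⟨l, hl, rfl⟩ := Multiset.mem_map.mp hx
    obtain ⟨k, hk⟩ := h l hl
    omega
  omega

lemma v_empty : v 0 = 0 := by simp [v, vAux]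

lemma main_loops (L : Multiset ℤ) :
    (∀ l ∈ L, 6 ≤ l ∧ Even l) → v (L.map Comp.loop) = F L := by
  induction L using Multiset.strongInductionOn with
  | _ L ih =>
  intro h6
  by_cases hL : L = 0
  · subst hL; simp [F, v_empty]
  -- the value by induction on erase
  have hF : F L = if 2 ≤ cL L then cL L else if (4:ℤ) ∣ cL L then 4 else 2 := by
    rw [F, if_neg hL]
  have hceven : (2:ℤ) ∣ cL L := cL_even L (fun l hl => (h6 l hl).2)
  -- card cases
  rcases Nat.lt_or_ge (Multiset.card L) 2 with hcard | hcard
  · -- singleton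
    have h1 : Multiset.card L = 1 := by
      have : Multiset.card L ≠ 0 := by simpa [Multiset.card_eq_zero] using hL
      omega
    obtain ⟨l, rfl⟩ := Multiset.card_eq_one.mp h1
    have hl6 : 6 ≤ l := (h6 l (by simp)).1
    have hcl : cL {l} = l := by simp [cL]
    have hv : v (({l} : Multiset ℤ).map Comp.loop) = l := by
      apply v_loops_eq _ (by simp) l
      · refine ⟨l, by simp, ?_⟩
        rw [show ({l} : Multiset ℤ).erase l = 0 by simp]
        simp [v_empty]
      · intro x hx
        rw [Multiset.mem_singleton.mp hx,
          show ({l} : Multiset ℤ).erase l = 0 by simp]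
        simp [v_empty]
    rw [hv, hF, hcl, if_pos (by omega)]
  · -- at least two loops
    have herase_ne : ∀ l ∈ L, L.erase l ≠ 0 := by
      intro l hl h0
      have := Multiset.card_erase_of_mem hl
      rw [h0] at this
      simp at this
      omega
    -- value of erase by IH
    have hve : ∀ l ∈ L, v ((L.erase l).map Comp.loop) =
        if 2 ≤ cL L + 8 - l then cL L + 8 - l
        else if (4:ℤ) ∣ cL L + 8 - l then 4 else 2 := by
      intro l hl
      rw [ih (L.erase l) (Multiset.erase_lt.mpr hl)
        (fun x hx => h6 x (Multiset.mem_of_mem_erase hx)),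
        F, if_neg (herase_ne l hl), cL_erase L l hl]
    have hterm_ge : ∀ l ∈ L, ∀ t : ℤ,
        (t ≤ cL L ∨ (cL L ≤ 0 ∧ ((4 ∣ cL L ∧ t ≤ 4) ∨ (¬ 4 ∣ cL L ∧ t ≤ 2)))) →
        t ≤ l - 4 + |v ((L.erase l).map Comp.loop) - 4| := by
      intro l hl t ht
      have hl6 : 6 ≤ l := (h6 l hl).1
      have hlev : (2:ℤ) ∣ l := (h6 l hl).2.two_dvd
      rw [hve l hl]
      rcases le_or_gt 2 (cL L + 8 - l) with h2 | h2
      · rw [if_pos h2]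
        rcases le_or_gt 4 (cL L + 8 - l) with h4 | h4
        · rw [abs_of_nonneg (by omega)]
          rcases ht with h | ⟨h, _⟩ <;> omega
        · rw [abs_of_nonpos (by omega)]
          rcases ht with h | ⟨h, _⟩ <;> omega
      · rw [if_neg (by omega)]
        by_cases h4 : (4:ℤ) ∣ cL L + 8 - l
        · rw [if_pos h4]
          simp only [sub_self, abs_zero]
          rcases ht with h | ⟨h, ⟨hd, h'⟩ | ⟨hd, h'⟩⟩ <;> omega
        · rw [if_neg h4]
          rw [show |(2:ℤ) - 4| = 2 by norm_num]
          rcases ht with h | ⟨h, ⟨hd, h'⟩ | ⟨hd, h'⟩⟩ <;> omega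
    rcases le_or_gt 2 (cL L) with hc2 | hc2
    · -- c ≥ 2 : v = cL L
      rw [hF, if_pos hc2]
      -- find a small loop
      have hexists : ∃ l ∈ L, l ≤ cL L + 4 := by
        by_contra hcon
        push_neg at hcon
        have hcon' : ∀ x ∈ L.map (fun l => l - 8), cL L - 2 ≤ x := by
          intro x hx
          obtain ⟨l, hl, rfl⟩ := Multiset.mem_map.mp hx
          have h1 := hcon l hl
          have h2 : (2:ℤ) ∣ l := (h6 l hl).2.two_dvd
          show cL L - 2 ≤ l - 8
          omega
        have h1 := Multiset.card_nsmul_le_sum hcon'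
        rw [Multiset.card_map] at h1
        have h2 : (Multiset.card L : ℤ) * (cL L - 2) ≤ (L.map (fun l => l - 8)).sum := by
          simpa [nsmul_eq_mul] using h1
        have h3 : (2:ℤ) * (cL L - 2) ≤ (Multiset.card L : ℤ) * (cL L - 2) :=
          mul_le_mul_of_nonneg_right (by exact_mod_cast hcard) (by linarith)
        have h4 : (L.map (fun l => l - 8)).sum = cL L - 8 := by unfold cL; ring
        linarith
      obtain ⟨l, hl, hlsmall⟩ := hexists
      apply v_loops_eq _ hL
      · refine ⟨l, hl, ?_⟩
        rw [hve l hl, if_pos (by omega), abs_of_nonneg (by omega)]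
        ring
      · intro x hx
        exact hterm_ge x hx _ (Or.inl le_rfl)
    · -- c ≤ 0
      have hc0 : cL L ≤ 0 := by omega
      -- there is a 6-loop
      have h6ex : (6:ℤ) ∈ L := by
        by_contra hcon
        have hpos : ∀ x ∈ L.map (fun l => l - 8), (0:ℤ) ≤ x := by
          intro x hx
          obtain ⟨l, hl, rfl⟩ := Multiset.mem_map.mp hx
          have h1 := (h6 l hl).1
          have h2 := (h6 l hl).2.two_dvd
          have : l ≠ 6 := fun h => hcon (h ▸ hl)
          omega
        have := Multiset.sum_nonneg hpos
        have h4 : (L.map (fun l => l - 8)).sum = cL L - 8 := by unfold cL; ring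
        omega
      have hterm6 : (6:ℤ) - 4 + |v ((L.erase 6).map Comp.loop) - 4| =
          if (4:ℤ) ∣ cL L then 4 else 2 := by
        rw [hve 6 h6ex]
        rcases le_or_gt 2 (cL L + 8 - 6) with h2 | h2
        · -- cL L + 2 = 2, i.e. cL L = 0
          have : cL L = 0 := by omega
          rw [if_pos h2, this]
          norm_num
        · rw [if_neg (by omega)]
          by_cases h4 : (4:ℤ) ∣ cL L + 8 - 6
          · rw [if_pos h4, if_neg (by omega)]
            norm_num
          · rw [if_neg h4, if_pos (by omega)]
            norm_num
      rw [hF, if_neg (by omega)]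
      apply v_loops_eq _ hL
      · exact ⟨6, h6ex, hterm6⟩
      · intro x hx
        by_cases h4 : (4:ℤ) ∣ cL L
        · rw [if_pos h4]
          exact hterm_ge x hx 4 (Or.inr ⟨hc0, Or.inl ⟨h4, le_rfl⟩⟩)
        · rw [if_neg h4]
          exact hterm_ge x hx 2 (Or.inr ⟨hc0, Or.inr ⟨h4, le_rfl⟩⟩)

theorem stmt4 (L : Multiset ℤ) (hL : L ≠ 0) (hl : ∀ l ∈ L, 4 ≤ l ∧ Even l)
    (hno4 : ∀ l ∈ L, l ≠ 4)
    (c : ℤ) (hdef : c = 8 + (L.map (fun l => l - 8)).sum) (hc : c ≤ 0) :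
    v (L.map Comp.loop) ∈ ({2, 4} : Set ℤ) ∧ v (L.map Comp.loop) ≡ c [ZMOD 4] := by
  have h6 : ∀ l ∈ L, 6 ≤ l ∧ Even l := by
    intro l hl'
    obtain ⟨h4, hev⟩ := hl l hl'
    refine ⟨?_, hev⟩
    have h2 : (2:ℤ) ∣ l := hev.two_dvd
    have := hno4 l hl'
    omega
  have hcL : cL L = c := by rw [hdef]; rfl
  have hceven : (2:ℤ) ∣ c := by rw [← hcL]; exact cL_even L (fun l hl' => (h6 l hl').2)
  have hv : v (L.map Comp.loop) = F L := main_loops L h6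
  have hFL : F L = if (4:ℤ) ∣ c then 4 else 2 := by
    rw [F, if_neg hL, hcL, if_neg (by omega)]
  rw [hv, hFL]
  by_cases h4 : (4:ℤ) ∣ c
  · rw [if_pos h4]
    refine ⟨by simp, ?_⟩
    rw [Int.ModEq]
    omega
  · rw [if_neg h4]
    refine ⟨by simp, ?_⟩
    rw [Int.ModEq]
    omega
end

section
/- Let G be a simple loony endgame and let m, n be integers with 3 ≤ m ≤ n. Then |v(G + m) - v(G + n)| ≤ n - m, where G + k denotes G together with one additional chain of length k. Similarly, for even m, n with 4 ≤ m ≤ n, |v(G + m_ℓ) - v(G + n_ℓ)| ≤ n - m, where G + k_ℓ denotes G with one additional loop of length k. -/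
namespace Stmt7Aux

/-- The "base" contribution of taking a component. -/
def base : Comp → ℤ
  | .chain c => c - 2
  | .loop l => l - 4

/-- The "offset" in the absolute value. -/
def off : Comp → ℤ
  | .chain _ => 2
  | .loop _ => 4

lemma match_eq (p : Comp) (X : ℤ) :
    (match p with
      | Comp.chain c => c - 2 + |X - 2|
      | Comp.loop l => l - 4 + |X - 4|) = base p + |X - off p| := by
  cases p <;> rfl

lemma erase_cons_mem (b p : Comp) (G : Multiset Comp) (hp : p ∈ G) :
    (b ::ₘ G).erase p = b ::ₘ G.erase p := by
  by_cases h : p = b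
  · subst h
    rw [Multiset.erase_cons_head, Multiset.cons_erase hp]
  · rw [Multiset.erase_cons_tail _ (fun he => h he.symm)]

lemma vAux_eq_v : ∀ (k : ℕ) (G : Multiset Comp), Multiset.card G ≤ k → vAux k G = v G := by
  intro k
  induction k using Nat.strong_induction_on with
  | _ k ih =>
  match k with
  | 0 =>
    intro G hG
    have hG0 : G = 0 := by
      rw [← Multiset.card_eq_zero]; omega
    subst hG0
    simp [v, vAux]
  | k + 1 =>
    intro G hG
    by_cases h0 : G = 0
    · subst h0; simp [v, vAux]
    · have hcpos : 0 < Multiset.card G := Multiset.card_pos.mpr h0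
      have hc : Multiset.card G = (Multiset.card G - 1) + 1 := by omega
      have key : ∀ p ∈ G, vAux k (G.erase p) = vAux (Multiset.card G - 1) (G.erase p) := by
        intro p hp
        have hce : Multiset.card (G.erase p) = Multiset.card G - 1 :=
          Multiset.card_erase_of_mem hp
        rw [ih k (by omega) _ (by omega), ih (Multiset.card G - 1) (by omega) _ (by omega)]
      conv_rhs => rw [v, hc]
      show vAux (k + 1) G = vAux ((Multiset.card G - 1) + 1) G
      simp only [vAux, if_neg h0]
      congr 1
      ext x
      constructor <;> rintro ⟨p, hp, rfl⟩ <;> refine ⟨p, hp, ?_⟩ <;> cases p <;>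
        simp only [] <;> rw [key _ hp]

lemma v_eq (G : Multiset Comp) (h : G ≠ 0) :
    v G = sInf { x : ℤ | ∃ p ∈ G, x = base p + |v (G.erase p) - off p| } := by
  have hcpos : 0 < Multiset.card G := Multiset.card_pos.mpr h
  have hc : Multiset.card G = (Multiset.card G - 1) + 1 := by omega
  conv_lhs => rw [v, hc]
  simp only [vAux, if_neg h]
  congr 1
  ext x
  constructor <;> rintro ⟨p, hp, rfl⟩ <;> refine ⟨p, hp, ?_⟩
  · rw [match_eq p, vAux_eq_v _ _ (by
      have h1 : Multiset.card (G.erase p) = Multiset.card G - 1 :=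
        Multiset.card_erase_of_mem hp
      omega)]
  · rw [match_eq p, vAux_eq_v _ _ (by
      have h1 : Multiset.card (G.erase p) = Multiset.card G - 1 :=
        Multiset.card_erase_of_mem hp
      omega)]

/-- The option set of a nonempty game. -/
def S (G : Multiset Comp) : Set ℤ :=
  { x : ℤ | ∃ p ∈ G, x = base p + |v (G.erase p) - off p| }

lemma v_eq' (G : Multiset Comp) (h : G ≠ 0) : v G = sInf (S G) := v_eq G h

lemma S_nonempty (G : Multiset Comp) (h : G ≠ 0) : (S G).Nonempty := by
  obtain ⟨p, hp⟩ := Multiset.exists_mem_of_ne_zero h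
  exact ⟨base p + |v (G.erase p) - off p|, p, hp, rfl⟩

lemma S_bddBelow (G : Multiset Comp) : BddBelow (S G) := by
  have hfin : ((fun p => base p + |v (G.erase p) - off p|) '' { p | p ∈ G }).Finite :=
    (Multiset.finite_toSet G).image _
  refine (hfin.bddBelow).mono ?_
  rintro x ⟨p, hp, rfl⟩
  exact ⟨p, hp, rfl⟩

lemma sInf_diff_le {Sa Sb : Set ℤ} (hSa : Sa.Nonempty) (hSb : Sb.Nonempty)
    (hba : BddBelow Sa) (hbb : BddBelow Sb) (d : ℤ)
    (h1 : ∀ x ∈ Sa, ∃ y ∈ Sb, |x - y| ≤ d)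
    (h2 : ∀ y ∈ Sb, ∃ x ∈ Sa, |x - y| ≤ d) :
    |sInf Sa - sInf Sb| ≤ d := by
  rw [abs_le]
  constructor
  · have hlb : ∀ x ∈ Sa, sInf Sb - d ≤ x := by
      intro x hx
      obtain ⟨y, hy, hxy⟩ := h1 x hx
      have ha := csInf_le hbb hy
      have hb := abs_le.mp hxy
      linarith [hb.1, hb.2]
    have := le_csInf hSa hlb
    linarith
  · have hlb : ∀ y ∈ Sb, sInf Sa - d ≤ y := by
      intro y hy
      obtain ⟨x, hx, hxy⟩ := h2 y hy
      have ha := csInf_le hba hx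
      have hb := abs_le.mp hxy
      linarith [hb.1, hb.2]
    have := le_csInf hSb hlb
    linarith

lemma match_dir (G : Multiset Comp) (a b : Comp) (hoff : off a = off b)
    (ih : ∀ p ∈ G, |v (a ::ₘ G.erase p) - v (b ::ₘ G.erase p)| ≤ |base a - base b|) :
    ∀ x ∈ S (a ::ₘ G), ∃ y ∈ S (b ::ₘ G), |x - y| ≤ |base a - base b| := by
  rintro x ⟨p, hp, rfl⟩
  rcases Multiset.mem_cons.mp hp with rfl | hpG
  · refine ⟨base b + |v G - off b|, ⟨b, Multiset.mem_cons_self b G, by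
      rw [Multiset.erase_cons_head]⟩, ?_⟩
    rw [Multiset.erase_cons_head, hoff]
    have : base p + |v G - off b| - (base b + |v G - off b|) = base p - base b := by ring
    rw [this]
  · refine ⟨base p + |v (b ::ₘ G.erase p) - off p|, ⟨p, Multiset.mem_cons_of_mem hpG, by
      rw [erase_cons_mem b p G hpG]⟩, ?_⟩
    rw [erase_cons_mem a p G hpG]
    have heq : base p + |v (a ::ₘ G.erase p) - off p| -
        (base p + |v (b ::ₘ G.erase p) - off p|) =
        |v (a ::ₘ G.erase p) - off p| - |v (b ::ₘ G.erase p) - off p| := by ring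
    rw [heq]
    calc |(|v (a ::ₘ G.erase p) - off p| - |v (b ::ₘ G.erase p) - off p|)|
        ≤ |(v (a ::ₘ G.erase p) - off p) - (v (b ::ₘ G.erase p) - off p)| :=
          abs_abs_sub_abs_le_abs_sub _ _
      _ = |v (a ::ₘ G.erase p) - v (b ::ₘ G.erase p)| := by ring_nf
      _ ≤ |base a - base b| := ih p hpG

lemma key : ∀ (N : ℕ) (G : Multiset Comp), Multiset.card G ≤ N →
    ∀ a b : Comp, off a = off b →
    |v (a ::ₘ G) - v (b ::ₘ G)| ≤ |base a - base b| := by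
  intro N
  induction N with
  | zero =>
    intro G hG a b hoff
    have hG0 : G = 0 := by rw [← Multiset.card_eq_zero]; omega
    subst hG0
    rw [v_eq' _ (Multiset.cons_ne_zero), v_eq' _ (Multiset.cons_ne_zero)]
    apply sInf_diff_le (S_nonempty _ Multiset.cons_ne_zero) (S_nonempty _ Multiset.cons_ne_zero)
      (S_bddBelow _) (S_bddBelow _)
    · exact match_dir 0 a b hoff (by intro p hp; simp at hp)
    · have := match_dir 0 b a hoff.symm (by intro p hp; simp at hp)
      intro y hy
      obtain ⟨x, hx, hxy⟩ := this y hy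
      exact ⟨x, hx, by rw [abs_sub_comm] at hxy; rw [abs_sub_comm (base a)]; exact hxy⟩
  | succ N ih =>
    intro G hG a b hoff
    rw [v_eq' _ (Multiset.cons_ne_zero), v_eq' _ (Multiset.cons_ne_zero)]
    have ih' : ∀ p ∈ G, |v (a ::ₘ G.erase p) - v (b ::ₘ G.erase p)| ≤ |base a - base b| := by
      intro p hp
      have hce : Multiset.card (G.erase p) = Multiset.card G - 1 :=
        Multiset.card_erase_of_mem hp
      have hm : 0 < Multiset.card G := Multiset.card_pos.mpr (by
        rintro rfl; exact absurd hp (Multiset.notMem_zero p))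
      exact ih (G.erase p) (by omega) a b hoff
    have ih'' : ∀ p ∈ G, |v (b ::ₘ G.erase p) - v (a ::ₘ G.erase p)| ≤ |base b - base a| := by
      intro p hp
      rw [abs_sub_comm, abs_sub_comm (base b)]
      exact ih' p hp
    apply sInf_diff_le (S_nonempty _ Multiset.cons_ne_zero) (S_nonempty _ Multiset.cons_ne_zero)
      (S_bddBelow _) (S_bddBelow _)
    · exact match_dir G a b hoff ih'
    · intro y hy
      obtain ⟨x, hx, hxy⟩ := match_dir G b a hoff.symm ih'' y hy
      exact ⟨x, hx, by rw [abs_sub_comm] at hxy; rw [abs_sub_comm (base a)]; exact hxy⟩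

end Stmt7Aux

theorem stmt7 (G : Multiset Comp) (hG : IsSimpleLoony G) (m n : ℤ) :
    (3 ≤ m → m ≤ n →
      |v (Comp.chain m ::ₘ G) - v (Comp.chain n ::ₘ G)| ≤ n - m) ∧
    (4 ≤ m → m ≤ n → Even m → Even n →
      |v (Comp.loop m ::ₘ G) - v (Comp.loop n ::ₘ G)| ≤ n - m) := by
  constructor
  · intro _ hmn
    have h := Stmt7Aux.key (Multiset.card G) G le_rfl (Comp.chain m) (Comp.chain n) rfl
    have habs : |Stmt7Aux.base (Comp.chain m) - Stmt7Aux.base (Comp.chain n)| = n - m := by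
      show |m - 2 - (n - 2)| = n - m
      rw [show m - 2 - (n - 2) = m - n by ring, abs_of_nonpos (by linarith)]
      ring
    rw [habs] at h
    exact h
  · intro _ hmn _ _
    have h := Stmt7Aux.key (Multiset.card G) G le_rfl (Comp.loop m) (Comp.loop n) rfl
    have habs : |Stmt7Aux.base (Comp.loop m) - Stmt7Aux.base (Comp.loop n)| = n - m := by
      show |m - 4 - (n - 4)| = n - m
      rw [show m - 4 - (n - 4) = m - n by ring, abs_of_nonpos (by linarith)]
      ring
    rw [habs] at h
    exact h
end

section
/- Let G be a simple loony endgame and let a, b ≥ 4 with c = a + b - 4. Then v(G + a + b) = v(G + c), where G + a + b denotes G together with additional chains of lengths a and b, and G + c denotes G together with one additional chain of length c. -/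
namespace DBHelper

open Multiset

/-- The option value function. -/
noncomputable def fOpt : Comp → ℤ → ℤ
  | .chain c, w => c - 2 + |w - 2|
  | .loop l, w => l - 4 + |w - 4|

noncomputable def optSet (G : Multiset Comp) : Set ℤ :=
  { x | ∃ p ∈ G, x = fOpt p (v (G.erase p)) }

lemma vAux_succ_eq : ∀ (n : ℕ) (G : Multiset Comp), Multiset.card G ≤ n →
    vAux (n + 1) G = vAux n G := by
  intro n
  induction n with
  | zero =>
    intro G hG
    have h0 : G = 0 := by
      rw [← Multiset.card_eq_zero]; omega
    subst h0
    simp [vAux]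
  | succ n ih =>
    intro G hG
    by_cases h : G = 0
    · subst h; simp [vAux]
    · show (if G = 0 then 0 else _) = (if G = 0 then 0 else _)
      rw [if_neg h, if_neg h]
      congr 1
      refine Set.ext fun x => exists_congr fun p => and_congr_right fun hp => ?_
      have hc : Multiset.card (G.erase p) ≤ n := by
        have := Multiset.card_erase_lt_of_mem hp
        omega
      rw [ih (G.erase p) hc]

lemma vAux_eq_v : ∀ (n : ℕ) (G : Multiset Comp), Multiset.card G ≤ n → vAux n G = v G := by
  intro n
  induction n with
  | zero =>
    intro G hG
    have h0 : Multiset.card G = 0 := by omega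
    unfold v
    rw [h0]
  | succ n ih =>
    intro G hG
    rcases Nat.lt_or_ge (Multiset.card G) (n + 1) with h | h
    · rw [vAux_succ_eq n G (by omega), ih G (by omega)]
    · have h' : Multiset.card G = n + 1 := by omega
      unfold v
      rw [h']

lemma v_eq (G : Multiset Comp) (h : G ≠ 0) : v G = sInf (optSet G) := by
  have hcard : Multiset.card G = (Multiset.card G - 1) + 1 := by
    have : Multiset.card G ≠ 0 := by simpa using h
    omega
  show vAux (Multiset.card G) G = _
  rw [hcard]
  show (if G = 0 then 0 else _) = _
  rw [if_neg h]
  congr 1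
  refine Set.ext fun x => exists_congr fun p => and_congr_right fun hp => ?_
  have hc : Multiset.card (G.erase p) ≤ Multiset.card G - 1 := by
    have := Multiset.card_erase_lt_of_mem hp
    omega
  have hre : vAux (Multiset.card G - 1) (G.erase p) = v (G.erase p) := vAux_eq_v _ _ hc
  cases p with
  | chain c => rw [hre]; rfl
  | loop l => rw [hre]; rfl

lemma optSet_finite (G : Multiset Comp) : (optSet G).Finite := by
  have hsub : optSet G ⊆ (fun p => fOpt p (v (G.erase p))) '' (G.toFinset : Set Comp) := by
    rintro x ⟨p, hp, rfl⟩
    exact ⟨p, by simpa using hp, rfl⟩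
  exact (G.toFinset.finite_toSet.image _).subset hsub

lemma optSet_nonempty (G : Multiset Comp) (h : G ≠ 0) : (optSet G).Nonempty := by
  obtain ⟨p, hp⟩ := Multiset.exists_mem_of_ne_zero h
  exact ⟨fOpt p (v (G.erase p)), p, hp, rfl⟩

lemma ne_zero_of_mem {G : Multiset Comp} {p : Comp} (hp : p ∈ G) : G ≠ 0 := by
  rintro rfl
  exact absurd hp (Multiset.notMem_zero p)

lemma v_le {G : Multiset Comp} {p : Comp} (hp : p ∈ G) :
    v G ≤ fOpt p (v (G.erase p)) := by
  rw [v_eq G (ne_zero_of_mem hp)]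
  exact csInf_le (optSet_finite G).bddBelow ⟨p, hp, rfl⟩

lemma le_v {G : Multiset Comp} (h0 : G ≠ 0) {b : ℤ}
    (h : ∀ p ∈ G, b ≤ fOpt p (v (G.erase p))) : b ≤ v G := by
  rw [v_eq G h0]
  refine le_csInf (optSet_nonempty G h0) ?_
  rintro x ⟨p, hp, rfl⟩
  exact h p hp

lemma v_attain {G : Multiset Comp} (h0 : G ≠ 0) :
    ∃ p ∈ G, v G = fOpt p (v (G.erase p)) := by
  have hm := (optSet_nonempty G h0).csInf_mem (optSet_finite G)
  rw [← v_eq G h0] at hm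
  exact hm

lemma fOpt_lip (p : Comp) (w1 w2 : ℤ) : fOpt p w1 ≤ fOpt p w2 + |w1 - w2| := by
  cases p with
  | chain c =>
    show c - 2 + |w1 - 2| ≤ c - 2 + |w2 - 2| + |w1 - w2|
    have h1 : |w1 - 2| - |w2 - 2| ≤ |(w1 - 2) - (w2 - 2)| := abs_sub_abs_le_abs_sub _ _
    have h2 : (w1 - 2) - (w2 - 2) = w1 - w2 := by ring
    rw [h2] at h1
    linarith
  | loop l =>
    show l - 4 + |w1 - 4| ≤ l - 4 + |w2 - 4| + |w1 - w2|
    have h1 : |w1 - 4| - |w2 - 4| ≤ |(w1 - 4) - (w2 - 4)| := abs_sub_abs_le_abs_sub _ _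
    have h2 : (w1 - 4) - (w2 - 4) = w1 - w2 := by ring
    rw [h2] at h1
    linarith

lemma lip_one (G : Multiset Comp) : ∀ x y : ℤ,
    v (Comp.chain x ::ₘ G) ≤ v (Comp.chain y ::ₘ G) + |x - y| := by
  induction G using Multiset.strongInductionOn with
  | _ G ih =>
    intro x y
    obtain ⟨p, hp, hv⟩ := v_attain (G := Comp.chain y ::ₘ G) (by simp)
    have hA : v (Comp.chain x ::ₘ G) ≤ fOpt (Comp.chain x) (v G) := by
      have := v_le (Multiset.mem_cons_self (Comp.chain x) G)
      rwa [Multiset.erase_cons_head] at this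
    rcases Multiset.mem_cons.1 hp with h | h
    · subst h
      rw [Multiset.erase_cons_head] at hv
      have hx : x - 2 ≤ y - 2 + |x - y| := by
        have := le_abs_self (x - y); linarith
      show v (Comp.chain x ::ₘ G) ≤ _
      calc v (Comp.chain x ::ₘ G) ≤ fOpt (Comp.chain x) (v G) := hA
        _ = x - 2 + |v G - 2| := rfl
        _ ≤ (y - 2 + |v G - 2|) + |x - y| := by linarith
        _ = fOpt (Comp.chain y) (v G) + |x - y| := rfl
        _ = v (Comp.chain y ::ₘ G) + |x - y| := by rw [hv]
    · rw [Multiset.erase_cons_tail_of_mem h] at hv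
      have hA' : v (Comp.chain x ::ₘ G) ≤ fOpt p (v (Comp.chain x ::ₘ G.erase p)) := by
        have := v_le (Multiset.mem_cons_of_mem h (b := Comp.chain x))
        rwa [Multiset.erase_cons_tail_of_mem h] at this
      have hlt : G.erase p < G := Multiset.erase_lt.2 h
      have h1 := ih (G.erase p) hlt x y
      have h2 := ih (G.erase p) hlt y x
      have habs : |v (Comp.chain x ::ₘ G.erase p) - v (Comp.chain y ::ₘ G.erase p)| ≤ |x - y| := by
        rw [abs_sub_le_iff]
        constructor
        · linarith
        · rw [abs_sub_comm] at h2; linarith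
      have := fOpt_lip p (v (Comp.chain x ::ₘ G.erase p)) (v (Comp.chain y ::ₘ G.erase p))
      calc v (Comp.chain x ::ₘ G) ≤ fOpt p (v (Comp.chain x ::ₘ G.erase p)) := hA'
        _ ≤ fOpt p (v (Comp.chain y ::ₘ G.erase p)) +
            |v (Comp.chain x ::ₘ G.erase p) - v (Comp.chain y ::ₘ G.erase p)| := this
        _ ≤ fOpt p (v (Comp.chain y ::ₘ G.erase p)) + |x - y| := by linarith
        _ = v (Comp.chain y ::ₘ G) + |x - y| := by rw [hv]

lemma main (G : Multiset Comp) : ∀ a b : ℤ, 4 ≤ a → 4 ≤ b →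
    v (Comp.chain a ::ₘ Comp.chain b ::ₘ G) = v (Comp.chain (a + b - 4) ::ₘ G) := by
  induction G using Multiset.strongInductionOn with
  | _ G ih =>
    intro a b ha hb
    set c : ℤ := a + b - 4 with hc
    -- basic Lipschitz facts
    have hcb : |c - b| = a - 4 := by
      rw [show c - b = a - 4 by omega, abs_of_nonneg (by omega)]
    have hca : |c - a| = b - 4 := by
      rw [show c - a = b - 4 by omega, abs_of_nonneg (by omega)]
    have hlip_b : v (Comp.chain c ::ₘ G) ≤ v (Comp.chain b ::ₘ G) + (a - 4) := by
      have := lip_one G c b; rwa [hcb] at this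
    have hlip_b' : v (Comp.chain b ::ₘ G) ≤ v (Comp.chain c ::ₘ G) + (a - 4) := by
      have := lip_one G b c
      rwa [abs_sub_comm, hcb] at this
    have hlip_a : v (Comp.chain c ::ₘ G) ≤ v (Comp.chain a ::ₘ G) + (b - 4) := by
      have := lip_one G c a; rwa [hca] at this
    apply le_antisymm
    · -- v (a::b::G) ≤ v (c::G)
      obtain ⟨p, hp, hv⟩ := v_attain (G := Comp.chain c ::ₘ G) (by simp)
      rcases Multiset.mem_cons.1 hp with h | h
      · subst h
        rw [Multiset.erase_cons_head] at hv
        -- hv : v (c::G) = c - 2 + |v G - 2|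
        have hW : v (Comp.chain b ::ₘ G) ≤ b - 2 + |v G - 2| := by
          have := v_le (Multiset.mem_cons_self (Comp.chain b) G)
          rwa [Multiset.erase_cons_head] at this
        have hopt : v (Comp.chain a ::ₘ Comp.chain b ::ₘ G) ≤
            a - 2 + |v (Comp.chain b ::ₘ G) - 2| := by
          have := v_le (Multiset.mem_cons_self (Comp.chain a) (Comp.chain b ::ₘ G))
          rwa [Multiset.erase_cons_head] at this
        have hvR : v (Comp.chain c ::ₘ G) = c - 2 + |v G - 2| := hv
        have hD : (0:ℤ) ≤ |v G - 2| := abs_nonneg _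
        rcases le_or_gt 2 (v (Comp.chain b ::ₘ G)) with hW2 | hW2
        · rw [abs_of_nonneg (by omega)] at hopt
          omega
        · rw [abs_of_nonpos (by omega)] at hopt
          omega
      · rw [Multiset.erase_cons_tail_of_mem h] at hv
        have hIH := ih (G.erase p) (Multiset.erase_lt.2 h) a b ha hb
        have hopt : v (Comp.chain a ::ₘ Comp.chain b ::ₘ G) ≤
            fOpt p (v (Comp.chain a ::ₘ Comp.chain b ::ₘ G.erase p)) := by
          have hmem : p ∈ Comp.chain a ::ₘ Comp.chain b ::ₘ G :=
            Multiset.mem_cons_of_mem (Multiset.mem_cons_of_mem h)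
          have := v_le hmem
          rwa [Multiset.erase_cons_tail_of_mem (Multiset.mem_cons_of_mem h),
            Multiset.erase_cons_tail_of_mem h] at this
        rw [hIH] at hopt
        rw [hv]
        exact hopt
    · -- v (c::G) ≤ v (a::b::G)
      apply le_v (G := Comp.chain a ::ₘ Comp.chain b ::ₘ G) (by simp)
      intro q hq
      rcases Multiset.mem_cons.1 hq with h | h
      · subst h
        rw [Multiset.erase_cons_head]
        show v (Comp.chain c ::ₘ G) ≤ a - 2 + |v (Comp.chain b ::ₘ G) - 2|
        rcases le_or_gt 2 (v (Comp.chain b ::ₘ G)) with hW2 | hW2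
        · rw [abs_of_nonneg (by omega)]
          omega
        · rw [abs_of_nonpos (by omega)]
          omega
      rcases Multiset.mem_cons.1 h with h' | h'
      · subst h'
        rw [show (Comp.chain a ::ₘ Comp.chain b ::ₘ G) = (Comp.chain b ::ₘ Comp.chain a ::ₘ G)
          from Multiset.cons_swap _ _ _, Multiset.erase_cons_head]
        show v (Comp.chain c ::ₘ G) ≤ b - 2 + |v (Comp.chain a ::ₘ G) - 2|
        rcases le_or_gt 2 (v (Comp.chain a ::ₘ G)) with hW2 | hW2
        · rw [abs_of_nonneg (by omega)]
          omega
        · rw [abs_of_nonpos (by omega)]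
          omega
      · rw [Multiset.erase_cons_tail_of_mem (Multiset.mem_cons_of_mem h'),
          Multiset.erase_cons_tail_of_mem h']
        have hIH := ih (G.erase q) (Multiset.erase_lt.2 h') a b ha hb
        rw [hIH]
        have hmem : q ∈ Comp.chain c ::ₘ G := Multiset.mem_cons_of_mem h'
        have := v_le hmem
        rwa [Multiset.erase_cons_tail_of_mem h'] at this

end DBHelper

theorem stmt9 (G : Multiset Comp) (hG : IsSimpleLoony G) (a b : ℤ)
    (ha : 4 ≤ a) (hb : 4 ≤ b) :
    v (Comp.chain a ::ₘ Comp.chain b ::ₘ G) = v (Comp.chain (a + b - 4) ::ₘ G) :=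
  DBHelper.main G a b ha hb
end
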